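/- Let f = (f_V, {f_{l,v}}) : Γ → Γ' be a morphism of moment graphs on Λ and ξ = {ξ_v} a Γ-monodromy such that whenever v—w is an edge of Γ with f_V(v) ≠ f_V(w), one has ξ_v(l'(f_E(v—w))) ∈ l(v—w)·ℤ, so that the twisted pull-backs f^{ξ*} : Z_m(Γ') → Z_m(Γ) and f^{ξ*} : Z_a^{≤i}(Γ')_ℚ → Z_a^{≤i}(Γ)_ℚ, both given by (z_{v'})_{v'} ↦ (ξ_v(z_{f_V(v)}))_v, are defined. Then the localized Chern character respects pull-backs: f^{ξ*} ∘ cch'_i = cch_i ∘ f^{ξ*}, where cch'_i and cch_i are the localized Chern characters of Γ' and Γ respectively. -/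

import Mathlib

noncomputable section

/-- A moment graph on a lattice `Λ`: a poset of vertices (the order given as a
relation with axioms), a set of directed edges `E ⊆ V × V`, and a label function
assigning to each edge a nonzero element of `Λ`, such that edges respect the
order and are not loops. -/
structure MomentGraph (Λ : Type*) [AddCommGroup Λ] (V : Type*) where
  le : V → V → Prop
  le_refl : ∀ v, le v v
  le_trans : ∀ u v w, le u v → le v w → le u w
  le_antisymm : ∀ v w, le v w → le w v → v = w
  E : V → V → Prop
  label : V → V → Λ
  label_ne_zero : ∀ {v w}, E v w → label v w ≠ 0
  le_of_E : ∀ {v w}, E v w → le v w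
  ne_of_E : ∀ {v w}, E v w → v ≠ w

namespace MomentGraph

variable {Λ : Type*} [AddCommGroup Λ] {V V' : Type*}

/-- Underlying (unoriented) adjacency `v — w`. -/
def Adj (G : MomentGraph Λ V) (v w : V) : Prop := G.E v w ∨ G.E w v

open Classical in
/-- The label of the unoriented edge `v — w` (there are no multiple edges, so this
is well defined on adjacent pairs). -/
def albl (G : MomentGraph Λ V) (v w : V) : Λ := if G.E v w then G.label v w else G.label w v

/-- A morphism of moment graphs on the same lattice `Λ` (Definition 2.3):
a poset morphism on vertices sending edges to edges or collapsing them (MR1),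
together with a `ℤ`-linear automorphism of `Λ` for every vertex satisfying
(MR2)(a) and (MR2)(b). -/
structure Hom (G : MomentGraph Λ V) (G' : MomentGraph Λ V') where
  toFun : V → V'
  mono : ∀ {v w}, G.le v w → G'.le (toFun v) (toFun w)
  adj : ∀ {v w}, G.Adj v w → G'.Adj (toFun v) (toFun w) ∨ toFun v = toFun w
  aut : V → (Λ ≃ₗ[ℤ] Λ)
  label_pm : ∀ {v w}, G.Adj v w → toFun v ≠ toFun w →
      aut v (G.albl v w) = G'.albl (toFun v) (toFun w) ∨
      aut v (G.albl v w) = - G'.albl (toFun v) (toFun w)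
  compat : ∀ {v w}, G.Adj v w → toFun v ≠ toFun w → ∀ μ : Λ,
      ∃ n : ℤ, aut v μ - aut w μ = n • G'.albl (toFun v) (toFun w)

/-- A morphism of moment graphs is an isomorphism if it has a two-sided inverse
morphism, inverting both the vertex map and the label automorphisms. -/
def Hom.IsIso {G : MomentGraph Λ V} {G' : MomentGraph Λ V'} (f : G.Hom G') : Prop :=
  ∃ g : G'.Hom G, (∀ v, g.toFun (f.toFun v) = v) ∧ (∀ v', f.toFun (g.toFun v') = v') ∧
    ∀ v (μ : Λ), g.aut (f.toFun v) (f.aut v μ) = μ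

/-- A `Γ`-monodromy: a collection of lattice automorphisms `ξ_v` with
`ξ_v(λ) - ξ_w(λ) ∈ l(v → w)·ℤ` for all edges `v → w`. -/
def Monodromy (G : MomentGraph Λ V) (ξ : V → (Λ ≃ₗ[ℤ] Λ)) : Prop :=
  ∀ {v w}, G.E v w → ∀ μ : Λ, ∃ n : ℤ, ξ v μ - ξ w μ = n • G.label v w

/-- A `Γ`-compatible equivalence relation (EQV1) and (EQV2). -/
def Compatible (G : MomentGraph Λ V) (s : Setoid V) : Prop :=
  (∀ ⦃v w u⦄, s.r v w → G.le v u → G.le u w → s.r v u) ∧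
  (∀ ⦃v₁ w₁⦄, G.E v₁ w₁ → ¬ s.r v₁ w₁ → ∀ v₂, s.r v₂ v₁ →
    (∃! w₂, s.r w₂ w₁ ∧ G.E v₂ w₂) ∧
    (∀ w₂, s.r w₂ w₁ → G.E v₂ w₂ → G.label v₂ w₂ = G.label v₁ w₁))

/-- Edges of the quotient graph: `[v] → [w]` iff `v ≁ w` and there are
representatives joined by an edge. -/
def QE (G : MomentGraph Λ V) (s : Setoid V) (a b : Quotient s) : Prop :=
  a ≠ b ∧ ∃ v w, Quotient.mk s v = a ∧ Quotient.mk s w = b ∧ G.E v w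

open Classical in
/-- The label of a quotient edge, via a choice of representatives. -/
def Qlabel (G : MomentGraph Λ V) (s : Setoid V) (a b : Quotient s) : Λ :=
  if h : ∃ v, ∃ w, Quotient.mk s v = a ∧ Quotient.mk s w = b ∧ G.E v w
  then G.label h.choose h.choose_spec.choose else 0

/-- The covering relation of the vertex poset. -/
def cov (G : MomentGraph Λ V) (v w : V) : Prop :=
  G.le v w ∧ v ≠ w ∧ ∀ u, G.le v u → G.le u w → u = v ∨ u = w

/-- A special matching of the vertex poset (Definition of Brenti): a bijection `M`
such that `M(v)` covers or is covered by `v`, and if `M(v) ≠ w` and `v ⋖ w`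
then `M(v) ≤ M(w)`. -/
def SpecialMatching (G : MomentGraph Λ V) (M : V → V) : Prop :=
  Function.Bijective M ∧ (∀ v, G.cov (M v) v ∨ G.cov v (M v)) ∧
  (∀ v w, M v ≠ w → G.cov v w → G.le (M v) (M w))

end MomentGraph

noncomputable section StructureAlgebras

/-- The generic "structure algebra" construction: given an edge relation `E` on `V`
and an `A`-valued function `lab` (the image of the label of each edge in `A`),
this is the subalgebra of `∏_{v ∈ V} A` of tuples `(z_v)` with
`z_v - z_w ∈ lab v w · A` for every edge `v → w`, with coordinate-wise operations
and with `A` acting diagonally. -/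
def structAlg {V : Type*} {A : Type*} [CommRing A] (E : V → V → Prop) (lab : V → V → A) :
    Subalgebra A (V → A) where
  carrier := {z | ∀ ⦃v w⦄, E v w → ∃ t, z v - z w = lab v w * t}
  mul_mem' := by
    intro a b ha hb v w h
    obtain ⟨t, ht⟩ := ha h
    obtain ⟨t', ht'⟩ := hb h
    refine ⟨a v * t' + t * b w, ?_⟩
    simp only [Pi.mul_apply]
    linear_combination a v * ht' + b w * ht
  one_mem' := by intro v w h; exact ⟨0, by simp⟩
  add_mem' := by
    intro a b ha hb v w h
    obtain ⟨t, ht⟩ := ha h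
    obtain ⟨t', ht'⟩ := hb h
    refine ⟨t + t', ?_⟩
    simp only [Pi.add_apply]
    linear_combination ht + ht'
  zero_mem' := by intro v w h; exact ⟨0, by simp⟩
  algebraMap_mem' := by
    intro r v w h
    exact ⟨0, by simp⟩

set_option synthInstance.maxHeartbeats 4000000 in
instance structAlgAddCommGroup {V A : Type*} [CommRing A] (E : V → V → Prop)
    (lab : V → V → A) : AddCommGroup (structAlg E lab) :=
  inferInstance

set_option synthInstance.maxHeartbeats 4000000 in
instance structAlgModule {V A : Type*} [CommRing A] (E : V → V → Prop)
    (lab : V → V → A) : Module A (structAlg E lab) :=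
  inferInstance

/-- The group ring `ℤ[Λ]`. -/
abbrev GrpRing (Λ : Type*) [AddCommGroup Λ] := AddMonoidAlgebra ℤ Λ

variable {Λ : Type*} [AddCommGroup Λ]

/-- The basis element `e^μ` of the group ring `ℤ[Λ]`. -/
def grExp (μ : Λ) : GrpRing Λ := AddMonoidAlgebra.single μ 1

/-- The element `x_μ = 1 - e^{-μ}` of the group ring `ℤ[Λ]`. -/
def grX (μ : Λ) : GrpRing Λ := 1 - grExp (-μ)

/-- The augmentation `ℤ[Λ] → ℤ`, `e^λ ↦ 1`. -/
def grAug (Λ : Type*) [AddCommGroup Λ] : GrpRing Λ →+* ℤ :=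
  ((AddMonoidAlgebra.lift ℤ ℤ Λ) 1).toRingHom

/-- The augmentation ideal `I_m ⊂ ℤ[Λ]`. -/
def Im (Λ : Type*) [AddCommGroup Λ] : Ideal (GrpRing Λ) := RingHom.ker (grAug Λ)

/-- The multiplicative structure algebra of edge data `(E, lab)`:
tuples `(z_v)` of elements of `ℤ[Λ]` with `z_v - z_w ∈ x_{lab v w}·ℤ[Λ]`
for all edges. -/
abbrev ZmOf {V : Type*} (E : V → V → Prop) (lab : V → V → Λ) :
    Subalgebra (GrpRing Λ) (V → GrpRing Λ) :=
  structAlg E fun v w => grX (lab v w)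

/-- The multiplicative structure algebra `Z_m(Γ)` of a moment graph. -/
abbrev MomentGraph.Zm {V : Type*} (G : MomentGraph Λ V) :
    Subalgebra (GrpRing Λ) (V → GrpRing Λ) :=
  ZmOf G.E G.label

/-- Index type of a chosen basis of the lattice `Λ`. -/
abbrev bIdx (Λ : Type*) [AddCommGroup Λ] [Module.Free ℤ Λ] [Module.Finite ℤ Λ] :=
  Module.Free.ChooseBasisIndex ℤ Λ

/-- A model of the symmetric algebra `S^*(Λ)` over `ℤ`: the polynomial ring on a
basis of `Λ`. -/
abbrev SymZ (Λ : Type*) [AddCommGroup Λ] [Module.Free ℤ Λ] [Module.Finite ℤ Λ] :=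
  MvPolynomial (bIdx Λ) ℤ

variable [Module.Free ℤ Λ] [Module.Finite ℤ Λ]

/-- The canonical embedding `Λ → S^*(Λ)` (degree-one part). -/
def iotaZ (Λ : Type*) [AddCommGroup Λ] [Module.Free ℤ Λ] [Module.Finite ℤ Λ] :
    Λ →ₗ[ℤ] SymZ Λ :=
  (Finsupp.linearCombination ℤ fun i => (MvPolynomial.X i : SymZ Λ)).comp
    (Module.Free.chooseBasis ℤ Λ).repr.toLinearMap

/-- The additive structure algebra of edge data `(E, lab)`:
tuples `(z_v)` of elements of `S^*(Λ)` with `z_v - z_w ∈ l(v→w)·S^*(Λ)`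
for all edges. -/
abbrev ZaOf {V : Type*} (E : V → V → Prop) (lab : V → V → Λ) :
    Subalgebra (SymZ Λ) (V → SymZ Λ) :=
  structAlg E fun v w => iotaZ Λ (lab v w)

/-- The additive structure algebra `Z_a(Γ)` of a moment graph. -/
abbrev MomentGraph.Za {V : Type*} (G : MomentGraph Λ V) :
    Subalgebra (SymZ Λ) (V → SymZ Λ) :=
  ZaOf G.E G.label

end StructureAlgebras

noncomputable section Chern

variable {Λ : Type*} [AddCommGroup Λ] [Module.Free ℤ Λ] [Module.Finite ℤ Λ]

/-- A model of the rational symmetric algebra `S^*(Λ) ⊗ ℚ`. -/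
abbrev SymQ (Λ : Type*) [AddCommGroup Λ] [Module.Free ℤ Λ] [Module.Finite ℤ Λ] :=
  MvPolynomial (bIdx Λ) ℚ

/-- The canonical embedding `Λ → S^*(Λ) ⊗ ℚ`. -/
def iotaQ (Λ : Type*) [AddCommGroup Λ] [Module.Free ℤ Λ] [Module.Finite ℤ Λ] :
    Λ →ₗ[ℤ] SymQ Λ :=
  (Finsupp.linearCombination ℤ fun i => (MvPolynomial.X i : SymQ Λ)).comp
    (Module.Free.chooseBasis ℤ Λ).repr.toLinearMap

/-- The augmentation ideal `I_a` of the rational symmetric algebra: the kernel of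
the ring homomorphism sending every `λ ∈ Λ` to `0`. -/
def IaQ (Λ : Type*) [AddCommGroup Λ] [Module.Free ℤ Λ] [Module.Finite ℤ Λ] :
    Ideal (SymQ Λ) :=
  RingHom.ker (MvPolynomial.constantCoeff : SymQ Λ →+* ℚ)

/-- The truncated rational symmetric algebra `S^{≤ i}_ℚ(Λ) = (S^*(Λ)/I_a^{i+1}) ⊗ ℚ`. -/
abbrev STrunc (Λ : Type*) [AddCommGroup Λ] [Module.Free ℤ Λ] [Module.Finite ℤ Λ] (i : ℕ) :=
  SymQ Λ ⧸ (IaQ Λ) ^ (i + 1)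

/-- The quotient map `S^*_ℚ(Λ) → S^{≤ i}_ℚ(Λ)`. -/
def trMk (Λ : Type*) [AddCommGroup Λ] [Module.Free ℤ Λ] [Module.Finite ℤ Λ] (i : ℕ) :
    SymQ Λ →+* STrunc Λ i :=
  Ideal.Quotient.mk _

/-- The truncated exponential `Σ_{j ≤ i} μ^j/j!` in `S^{≤ i}_ℚ(Λ)`. -/
def texp (Λ : Type*) [AddCommGroup Λ] [Module.Free ℤ Λ] [Module.Finite ℤ Λ]
    (i : ℕ) (μ : Λ) : STrunc Λ i :=
  ∑ j ∈ Finset.range (i + 1), (j.factorial : ℚ)⁻¹ • (trMk Λ i (iotaQ Λ μ)) ^ j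

/-- The truncated rational additive structure algebra of edge data `(E, lab)`. -/
abbrev ZatOf {V : Type*} (i : ℕ) (E : V → V → Prop) (lab : V → V → Λ) :
    Subalgebra (STrunc Λ i) (V → STrunc Λ i) :=
  structAlg E fun v w => trMk Λ i (iotaQ Λ (lab v w))

/-- The truncated rational additive structure algebra `Z_a^{≤ i}(Γ)_ℚ`. -/
abbrev MomentGraph.Zat {V : Type*} (G : MomentGraph Λ V) (i : ℕ) :
    Subalgebra (STrunc Λ i) (V → STrunc Λ i) :=
  ZatOf i G.E G.label

end Chern

/-! Every map in sight is additive on `ℤ[Λ]`, so the claims need only be checked on the basis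
elements `e^μ`. There they reduce to `x_l ∣ e^μ - e^ν` for `μ - ν ∈ ℤ l`, and to
`l ∣ texp μ - texp (μ - l)`, which holds termwise since `a - b ∣ a^j - b^j`. A twist commutes
with `ch` because it is a ring map and so sends `Σ μ^j/j!` to `Σ ξ_v(μ)^j/j!`. For an edge
`v → w` of `Γ` not collapsed by `f`, the pulled-back difference splits as
`ξ_v(z_{f v} - z_{f w}) + (ξ_v - ξ_w)(z_{f w})`: the first summand is controlled by the twist
condition on `f v — f w`, the second by the monodromy condition. -/

section GroupRing

variable {Λ : Type*} [AddCommGroup Λ]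

lemma mem_structAlg_iff_dvd {V₀ A : Type*} [CommRing A] {E : V₀ → V₀ → Prop}
    {lab : V₀ → V₀ → A} {z : V₀ → A} :
    z ∈ structAlg E lab ↔ ∀ ⦃v w⦄, E v w → lab v w ∣ z v - z w :=
  Iff.rfl

lemma comp_mem_structAlg {V₀ A B : Type*} [CommRing A] [CommRing B] (φ : A →+ B)
    {E : V₀ → V₀ → Prop} {lab : V₀ → V₀ → A} {lab' : V₀ → V₀ → B}
    (hφ : ∀ ⦃v w⦄, E v w → ∀ t, lab' v w ∣ φ (lab v w * t)) {z : V₀ → A}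
    (hz : z ∈ structAlg E lab) : (fun v => φ (z v)) ∈ structAlg E lab' := by
  rw [mem_structAlg_iff_dvd]
  intro v w hvw
  obtain ⟨t, ht⟩ := hz hvw
  rw [← map_sub, ht]
  exact hφ hvw t

lemma grExp_zero : grExp (0 : Λ) = 1 := rfl

lemma grExp_add (μ ν : Λ) : grExp (μ + ν) = grExp μ * grExp ν := by
  simp [grExp, AddMonoidAlgebra.single_mul_single]

lemma grExp_nsmul (m : ℕ) (μ : Λ) : grExp (m • μ) = grExp μ ^ m := by
  induction m with
  | zero => rw [zero_nsmul, grExp_zero, pow_zero]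
  | succ m ih => rw [succ_nsmul, grExp_add, ih, pow_succ]

lemma grX_mul_grExp (l ν : Λ) : grX l * grExp ν = grExp ν - grExp (ν - l) := by
  rw [grX, sub_mul, one_mul, ← grExp_add, neg_add_eq_sub]

lemma grX_dvd_grExp_sub_grExp_of_nsmul {l μ ν : Λ} {m : ℕ} (h : μ = ν + m • l) :
    grX l ∣ grExp μ - grExp ν := by
  have hl : grX l ∣ grExp l - 1 :=
    ⟨grExp l, by rw [grX_mul_grExp, sub_self, grExp_zero]⟩
  rw [h, grExp_add, grExp_nsmul, ← mul_sub_one]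
  exact (hl.trans (by simpa using sub_dvd_pow_sub_pow (grExp l) 1 m)).mul_left _

lemma grX_dvd_grExp_sub_grExp {l μ ν : Λ} {n : ℤ} (h : μ - ν = n • l) :
    grX l ∣ grExp μ - grExp ν := by
  obtain ⟨m, rfl | rfl⟩ := n.eq_nat_or_neg
  · exact grX_dvd_grExp_sub_grExp_of_nsmul (sub_eq_iff_eq_add'.mp (h.trans (natCast_zsmul l m)))
  · refine dvd_sub_comm.mp (grX_dvd_grExp_sub_grExp_of_nsmul (m := m) (sub_eq_iff_eq_add'.mp ?_))
    rw [← neg_sub, h, neg_smul, neg_neg, natCast_zsmul]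

lemma grX_dvd_grX_zsmul (l : Λ) (n : ℤ) : grX l ∣ grX (n • l) :=
  grX_dvd_grExp_sub_grExp (μ := 0) (by rw [zero_sub, neg_neg])

lemma grpRing_addHom_ext {M : Type*} [AddCommGroup M] {φ ψ : GrpRing Λ →+ M}
    (h : ∀ μ, φ (grExp μ) = ψ (grExp μ)) : φ = ψ :=
  AddMonoidAlgebra.addHom_ext' fun μ => AddMonoidHom.ext_int (h μ)

lemma dvd_map_of_forall_dvd_map_grExp {R : Type*} [CommRing R] (φ : GrpRing Λ →+ R) {d : R}
    (h : ∀ μ, d ∣ φ (grExp μ)) (a : GrpRing Λ) : d ∣ φ a := by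
  have hφ : (Ideal.Quotient.mk (Ideal.span {d})).toAddMonoidHom.comp φ = 0 :=
    grpRing_addHom_ext fun μ => by simpa [Ideal.Quotient.eq_zero_iff_dvd] using h μ
  simpa [Ideal.Quotient.eq_zero_iff_dvd] using DFunLike.congr_fun hφ a

variable {ξv ξw : Λ ≃ₗ[ℤ] Λ} {g g' : GrpRing Λ →+* GrpRing Λ}

lemma map_grX (hg : ∀ μ, g (grExp μ) = grExp (ξv μ)) (μ : Λ) :
    g (grX μ) = grX (ξv μ) := by
  rw [grX, grX, map_sub, map_one, hg, map_neg]

lemma grX_dvd_sub_of_forall_sub_mem_zmultiples {l : Λ}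
    (hg : ∀ μ, g (grExp μ) = grExp (ξv μ)) (hg' : ∀ μ, g' (grExp μ) = grExp (ξw μ))
    (h : ∀ μ, ∃ n : ℤ, ξv μ - ξw μ = n • l) (a : GrpRing Λ) : grX l ∣ g a - g' a :=
  dvd_map_of_forall_dvd_map_grExp (g.toAddMonoidHom - g'.toAddMonoidHom)
    (fun μ => by
      obtain ⟨n, hn⟩ := h μ
      simpa [hg, hg'] using grX_dvd_grExp_sub_grExp hn) a

end GroupRing

section ChernCharacter

variable {Λ : Type*} [AddCommGroup Λ] [Module.Free ℤ Λ] [Module.Finite ℤ Λ] {i : ℕ}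

lemma iotaQ_sub_dvd_texp_sub_texp (μ ν : Λ) :
    trMk Λ i (iotaQ Λ (μ - ν)) ∣ texp Λ i μ - texp Λ i ν := by
  rw [texp, texp, ← Finset.sum_sub_distrib]
  refine Finset.dvd_sum fun j _ => ?_
  rw [← smul_sub, map_sub, map_sub]
  obtain ⟨c, hc⟩ := sub_dvd_pow_sub_pow (trMk Λ i (iotaQ Λ μ)) (trMk Λ i (iotaQ Λ ν)) j
  exact ⟨(j.factorial : ℚ)⁻¹ • c, by rw [hc, mul_smul_comm]⟩

lemma map_texp {ξv : Λ ≃ₗ[ℤ] Λ} (t : STrunc Λ i →+* STrunc Λ i)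
    (ht : ∀ μ, t (trMk Λ i (iotaQ Λ μ)) = trMk Λ i (iotaQ Λ (ξv μ))) (μ : Λ) :
    t (texp Λ i μ) = texp Λ i (ξv μ) := by
  simp only [texp, map_sum, ← ht, ← map_pow]
  exact Finset.sum_congr rfl fun j _ => map_rat_smul t.toAddMonoidHom _ _

variable {ch : GrpRing Λ →ₗ[ℤ] STrunc Λ i}

lemma iotaQ_dvd_ch_grX_mul (hch : ∀ μ, ch (grExp μ) = texp Λ i μ) (l : Λ) (a : GrpRing Λ) :
    trMk Λ i (iotaQ Λ l) ∣ ch (grX l * a) :=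
  dvd_map_of_forall_dvd_map_grExp (ch.toAddMonoidHom.comp (AddMonoidHom.mulLeft (grX l)))
    (fun ν => by
      simpa [grX_mul_grExp, hch] using iotaQ_sub_dvd_texp_sub_texp (i := i) ν (ν - l)) a

lemma ch_mem_ZatOf {V₀ : Type*} {E : V₀ → V₀ → Prop} {lab : V₀ → V₀ → Λ}
    {z : V₀ → GrpRing Λ} (hch : ∀ μ, ch (grExp μ) = texp Λ i μ) (hz : z ∈ ZmOf E lab) :
    (fun v => ch (z v)) ∈ ZatOf i E lab :=
  comp_mem_structAlg ch.toAddMonoidHom (fun _ _ _ => iotaQ_dvd_ch_grX_mul hch _) hz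

lemma ch_map_eq_map_ch {ξv : Λ ≃ₗ[ℤ] Λ} {g : GrpRing Λ →+* GrpRing Λ}
    {t : STrunc Λ i →+* STrunc Λ i} (hch : ∀ μ, ch (grExp μ) = texp Λ i μ)
    (hg : ∀ μ, g (grExp μ) = grExp (ξv μ))
    (ht : ∀ μ, t (trMk Λ i (iotaQ Λ μ)) = trMk Λ i (iotaQ Λ (ξv μ))) (a : GrpRing Λ) :
    ch (g a) = t (ch a) :=
  DFunLike.congr_fun (grpRing_addHom_ext (φ := ch.toAddMonoidHom.comp g.toAddMonoidHom)
    (ψ := t.toAddMonoidHom.comp ch.toAddMonoidHom)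
    fun μ => by simp [hg, hch, map_texp t ht]) a

end ChernCharacter

namespace MomentGraph

variable {Λ : Type*} [AddCommGroup Λ] {V V' : Type*}

lemma albl_of_E (G : MomentGraph Λ V) {v w : V} (h : G.E v w) : G.albl v w = G.label v w :=
  if_pos h

lemma grX_albl_dvd_sub_of_mem_Zm {G : MomentGraph Λ V} {z : V → GrpRing Λ} (hz : z ∈ G.Zm)
    {a b : V} (hab : G.Adj a b) : grX (G.albl a b) ∣ z a - z b := by
  unfold albl
  split_ifs with h
  · exact hz h
  · exact dvd_sub_comm.mp (hz (hab.resolve_left h))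

theorem Hom.twist_pullback_mem_Zm {G : MomentGraph Λ V} {G' : MomentGraph Λ V'}
    (f : G.Hom G') {ξ : V → (Λ ≃ₗ[ℤ] Λ)} (hmon : G.Monodromy ξ)
    (htw : ∀ v w, G.Adj v w → f.toFun v ≠ f.toFun w →
      ∃ n : ℤ, ξ v (G'.albl (f.toFun v) (f.toFun w)) = n • G.albl v w)
    {gξ : V → (GrpRing Λ →+* GrpRing Λ)}
    (hgξ : ∀ v (μ : Λ), gξ v (grExp μ) = grExp (ξ v μ)) {z : V' → GrpRing Λ}
    (hz : z ∈ G'.Zm) :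
    (fun v => gξ v (z (f.toFun v))) ∈ G.Zm := by
  rw [mem_structAlg_iff_dvd]
  intro v w hvw
  have hmono : grX (G.label v w) ∣ gξ v (z (f.toFun w)) - gξ w (z (f.toFun w)) :=
    grX_dvd_sub_of_forall_sub_mem_zmultiples (hgξ v) (hgξ w) (hmon hvw) _
  by_cases hf : f.toFun v = f.toFun w
  · rw [hf]
    exact hmono
  obtain ⟨n, hn⟩ := htw v w (Or.inl hvw) hf
  have hedge : grX (G.label v w) ∣ gξ v (z (f.toFun v) - z (f.toFun w)) := by
    have h := map_dvd (gξ v)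
      (grX_albl_dvd_sub_of_mem_Zm hz ((f.adj (Or.inl hvw)).resolve_right hf))
    rw [map_grX (hgξ v), hn, G.albl_of_E hvw] at h
    exact (grX_dvd_grX_zsmul _ n).trans h
  rw [map_sub] at hedge
  simpa using dvd_add hedge hmono

end MomentGraph

noncomputable section Statements
open MomentGraph
variable {Λ : Type*} [AddCommGroup Λ] [Module.Free ℤ Λ] [Module.Finite ℤ Λ]
variable {V V' : Type*}


theorem stmt15 (G : MomentGraph Λ V) (G' : MomentGraph Λ V') (f : G.Hom G')
    (ξ : V → (Λ ≃ₗ[ℤ] Λ)) (hmon : G.Monodromy ξ)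
    (htw : ∀ v w, G.Adj v w → f.toFun v ≠ f.toFun w →
      ∃ n : ℤ, ξ v (G'.albl (f.toFun v) (f.toFun w)) = n • G.albl v w)
    (i : ℕ) (ch : GrpRing Λ →ₗ[ℤ] STrunc Λ i)
    (hch : ∀ μ : Λ, ch (grExp μ) = texp Λ i μ)
    (gξ : V → (GrpRing Λ →+* GrpRing Λ))
    (hgξ : ∀ v (μ : Λ), gξ v (grExp μ) = grExp (ξ v μ))
    (tξ : V → (STrunc Λ i →+* STrunc Λ i))
    (htξ : ∀ v (μ : Λ), tξ v (trMk Λ i (iotaQ Λ μ)) = trMk Λ i (iotaQ Λ (ξ v μ))) :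
    ∀ z' : G'.Zm,
      ((fun v => gξ v ((z' : V' → GrpRing Λ) (f.toFun v))) ∈ G.Zm) ∧
      ((fun v' => ch ((z' : V' → GrpRing Λ) v')) ∈ G'.Zat i) ∧
      ((fun v => tξ v (ch ((z' : V' → GrpRing Λ) (f.toFun v)))) ∈ G.Zat i) ∧
      (∀ v : V, ch (gξ v ((z' : V' → GrpRing Λ) (f.toFun v))) =
        tξ v (ch ((z' : V' → GrpRing Λ) (f.toFun v)))) := by
  intro z'
  have hpull := f.twist_pullback_mem_Zm hmon htw hgξ z'.2
  have hcomm : ∀ v, ch (gξ v ((z' : V' → GrpRing Λ) (f.toFun v))) =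
      tξ v (ch ((z' : V' → GrpRing Λ) (f.toFun v))) :=
    fun v => ch_map_eq_map_ch hch (hgξ v) (htξ v) _
  refine ⟨hpull, ch_mem_ZatOf hch z'.2, ?_, hcomm⟩
  simpa only [hcomm] using ch_mem_ZatOf hch hpull

end Statements
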